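/- Let p be a prime, R an F_p-algebra, λ, a, c, d ∈ R with a^p + λ^p c invertible in R, and let D̃ = R[U,V]/(U^p − c, V^p − d), A = R[X,Y]/(X^p, Y^p) (the Hopf algebra of G^{(λ)}_R). Then the R-algebra homomorphism r̃: D̃ ⊗_R D̃ → D̃ ⊗_R A determined by U⊗1 ↦ U⊗1, V⊗1 ↦ V⊗1, 1⊗U ↦ U⊗1 + (a+λU)⊗X, 1⊗V ↦ V⊗1 + (a+λU)⊗Y is well defined (it respects the relations U^p = c, V^p = d in the second factor) and bijective, with inverse sending 1⊗X ↦ (1⊗U − U⊗1)·((a+λU)^{−1}⊗1) and 1⊗Y ↦ (1⊗V − V⊗1)·((a+λU)^{−1}⊗1). Hence Spec D̃ is a G^{(λ)}_R-torsor over Spec R. -/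

import Mathlib

/-!
Write `α = a + λU`. The map `r̃` is `s ⊗ t ↦ (s ⊗ 1) · g(t)`, where `g : D̃ → D̃ ⊗ A` sends
`U ↦ U ⊗ 1 + α ⊗ X` and `V ↦ V ⊗ 1 + α ⊗ Y`; it respects `U^p = c` and `V^p = d` because
`p`-th powers are additive in characteristic `p` and `X^p = Y^p = 0`; this uses nothing about
`α`. Since `α^p = a^p + λ^p c` is a unit, so is `α`, and the inverse is built the same way
from `X ↦ (1 ⊗ U - U ⊗ 1)(α⁻¹ ⊗ 1)`, which is well defined because
`(1 ⊗ U - U ⊗ 1)^p = 1 ⊗ c - c ⊗ 1 = 0`. Both composites fix the algebra generators, hence are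
the identity.
-/

open scoped TensorProduct

noncomputable section

/-- The algebra `D̃ = R[U,V]/(U^p - c, V^p - d)`. -/
abbrev Dt (p : ℕ) (R : Type*) [CommRing R] (c d : R) : Type _ :=
  MvPolynomial (Fin 2) R ⧸
    Ideal.span ({MvPolynomial.X 0 ^ p - MvPolynomial.C c,
      MvPolynomial.X 1 ^ p - MvPolynomial.C d} : Set (MvPolynomial (Fin 2) R))

/-- The class of `U` in `D̃`. -/
def dU (p : ℕ) (R : Type*) [CommRing R] (c d : R) : Dt p R c d :=
  Ideal.Quotient.mk _ (MvPolynomial.X 0)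

/-- The class of `V` in `D̃`. -/
def dV (p : ℕ) (R : Type*) [CommRing R] (c d : R) : Dt p R c d :=
  Ideal.Quotient.mk _ (MvPolynomial.X 1)

/-- The Hopf algebra `A = R[X,Y]/(X^p, Y^p)` of `G^{(λ)}_R`. -/
abbrev Aq (p : ℕ) (R : Type*) [CommRing R] : Type _ :=
  MvPolynomial (Fin 2) R ⧸
    Ideal.span ({MvPolynomial.X 0 ^ p, MvPolynomial.X 1 ^ p} :
      Set (MvPolynomial (Fin 2) R))

/-- The class of `X` in `A`. -/
def aX (p : ℕ) (R : Type*) [CommRing R] : Aq p R :=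
  Ideal.Quotient.mk _ (MvPolynomial.X 0)

/-- The class of `Y` in `A`. -/
def aY (p : ℕ) (R : Type*) [CommRing R] : Aq p R :=
  Ideal.Quotient.mk _ (MvPolynomial.X 1)

open Algebra.TensorProduct

section CharP

variable {p : ℕ} {S : Type*} [CommRing S]

theorem add_pow_char_of_algebra (hp : p.Prime) (R : Type*) [CommRing R] [CharP R p]
    [Algebra R S] (x y : S) : (x + y) ^ p = x ^ p + y ^ p := by
  rw [add_pow_prime_eq hp, ← map_natCast (algebraMap R S), CharP.cast_eq_zero, map_zero]
  ring

theorem sub_pow_char_of_algebra (hp : p.Prime) (R : Type*) [CommRing R] [CharP R p]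
    [Algebra R S] (x y : S) : (x - y) ^ p = x ^ p - y ^ p := by
  rw [eq_sub_iff_add_eq, ← add_pow_char_of_algebra hp R, sub_add_cancel]

theorem isUnit_algebraMap_add_algebraMap_mul (hp : p.Prime) {R : Type*} [CommRing R] [CharP R p]
    [Algebra R S] {a lam c : R} {u : S} (hu : u ^ p = algebraMap R S c)
    (hunit : IsUnit (a ^ p + lam ^ p * c)) :
    IsUnit (algebraMap R S a + algebraMap R S lam * u) := by
  have hpow : (algebraMap R S a + algebraMap R S lam * u) ^ p =
      algebraMap R S (a ^ p + lam ^ p * c) := by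
    rw [add_pow_char_of_algebra hp R, mul_pow, ← map_pow, ← map_pow, hu, ← map_mul, ← map_add]
  rw [← isUnit_pow_iff hp.ne_zero, hpow]
  exact hunit.map _

end CharP

section TensorProduct

variable {R : Type*} [CommRing R]
  {A B : Type*} [CommRing A] [Algebra R A] [CommRing B] [Algebra R B]

theorem Units.val_tmul_one_mul_mul_inv_tmul_one (w : Aˣ) (z : A ⊗[R] B) :
    (w.val ⊗ₜ[R] (1 : B)) * (z * (w.inv ⊗ₜ 1)) = z := by
  rw [mul_left_comm, tmul_mul_tmul, w.val_inv, mul_one, ← one_def, mul_one]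

theorem Units.val_tmul_mul_inv_tmul_one (w : Aˣ) (x : B) :
    (w.val ⊗ₜ[R] x) * (w.inv ⊗ₜ 1) = 1 ⊗ₜ x := by
  rw [tmul_mul_tmul, w.val_inv, mul_one]

variable {p : ℕ} [CharP R p]

theorem tmul_one_add_tmul_pow_of_pow_eq_zero (hp : p.Prime) (u w : A) {x : B} (hx : x ^ p = 0) :
    (u ⊗ₜ[R] (1 : B) + w ⊗ₜ[R] x) ^ p = (u ^ p) ⊗ₜ 1 := by
  rw [add_pow_char_of_algebra hp R, tmul_pow, tmul_pow, hx, one_pow, TensorProduct.tmul_zero,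
    add_zero]

theorem one_tmul_sub_tmul_one_mul_pow_of_pow_eq_algebraMap (hp : p.Prime) {u : A} {e : R}
    (hu : u ^ p = algebraMap R A e) (z : A ⊗[R] A) :
    (((1 : A) ⊗ₜ[R] u - u ⊗ₜ[R] (1 : A)) * z) ^ p = 0 := by
  rw [mul_pow, sub_pow_char_of_algebra hp R, tmul_pow, tmul_pow, hu, one_pow,
    ← algebraMap_apply', ← Algebra.TensorProduct.algebraMap_apply, sub_self, zero_mul]

end TensorProduct

section

variable {p : ℕ} {R : Type*} [CommRing R] {c d : R}

namespace Dt

theorem dU_pow : dU p R c d ^ p = algebraMap R _ c := by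
  have h : Ideal.Quotient.mk _ (MvPolynomial.X 0 ^ p - MvPolynomial.C c : MvPolynomial (Fin 2) R)
      = (0 : Dt p R c d) :=
    Ideal.Quotient.eq_zero_iff_mem.2 (Ideal.subset_span (Set.mem_insert _ _))
  rwa [map_sub, map_pow, sub_eq_zero] at h

theorem dV_pow : dV p R c d ^ p = algebraMap R _ d := by
  have h : Ideal.Quotient.mk _ (MvPolynomial.X 1 ^ p - MvPolynomial.C d : MvPolynomial (Fin 2) R)
      = (0 : Dt p R c d) :=
    Ideal.Quotient.eq_zero_iff_mem.2 (Ideal.subset_span (Set.mem_insert_of_mem _ rfl))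
  rwa [map_sub, map_pow, sub_eq_zero] at h

theorem algHom_ext {S : Type*} [Semiring S] [Algebra R S] {f g : Dt p R c d →ₐ[R] S}
    (hU : f (dU p R c d) = g (dU p R c d)) (hV : f (dV p R c d) = g (dV p R c d)) : f = g := by
  refine Ideal.Quotient.algHom_ext _ (MvPolynomial.algHom_ext fun i ↦ ?_)
  fin_cases i
  exacts [hU, hV]

variable {S : Type*} [CommRing S] [Algebra R S]

def lift (u v : S) (hu : u ^ p = algebraMap R S c) (hv : v ^ p = algebraMap R S d) :
    Dt p R c d →ₐ[R] S :=
  Ideal.Quotient.liftₐ _ (MvPolynomial.aeval ![u, v]) fun _ hq ↦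
    RingHom.mem_ker.1 <| Ideal.span_le.2 (by rintro _ (rfl | rfl) <;> simp [hu, hv]) hq

theorem lift_dU (u v : S) (hu : u ^ p = algebraMap R S c) (hv : v ^ p = algebraMap R S d) :
    lift u v hu hv (dU p R c d) = u :=
  MvPolynomial.aeval_X ![u, v] 0

theorem lift_dV (u v : S) (hu : u ^ p = algebraMap R S c) (hv : v ^ p = algebraMap R S d) :
    lift u v hu hv (dV p R c d) = v :=
  MvPolynomial.aeval_X ![u, v] 1

end Dt

namespace Aq

theorem aX_pow : aX p R ^ p = 0 := by
  rw [aX, ← map_pow, Ideal.Quotient.eq_zero_iff_mem]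
  exact Ideal.subset_span (Set.mem_insert _ _)

theorem aY_pow : aY p R ^ p = 0 := by
  rw [aY, ← map_pow, Ideal.Quotient.eq_zero_iff_mem]
  exact Ideal.subset_span (Set.mem_insert_of_mem _ rfl)

theorem algHom_ext {S : Type*} [Semiring S] [Algebra R S] {f g : Aq p R →ₐ[R] S}
    (hX : f (aX p R) = g (aX p R)) (hY : f (aY p R) = g (aY p R)) : f = g := by
  refine Ideal.Quotient.algHom_ext _ (MvPolynomial.algHom_ext fun i ↦ ?_)
  fin_cases i
  exacts [hX, hY]

variable {S : Type*} [CommRing S] [Algebra R S]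

def lift (x y : S) (hx : x ^ p = 0) (hy : y ^ p = 0) : Aq p R →ₐ[R] S :=
  Ideal.Quotient.liftₐ _ (MvPolynomial.aeval ![x, y]) fun _ hq ↦
    RingHom.mem_ker.1 <| Ideal.span_le.2 (by rintro _ (rfl | rfl) <;> simp [hx, hy]) hq

theorem lift_aX (x y : S) (hx : x ^ p = 0) (hy : y ^ p = 0) : lift x y hx hy (aX p R) = x :=
  MvPolynomial.aeval_X ![x, y] 0

theorem lift_aY (x y : S) (hx : x ^ p = 0) (hy : y ^ p = 0) : lift x y hx hy (aY p R) = y :=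
  MvPolynomial.aeval_X ![x, y] 1

end Aq

variable [CharP R p]

-- The paper's `r̃`, with an arbitrary `w` in place of `a + λU`.
def rTilde (hp : p.Prime) (w : Dt p R c d) :
    Dt p R c d ⊗[R] Dt p R c d →ₐ[R] Dt p R c d ⊗[R] Aq p R :=
  productMap includeLeft <|
    Dt.lift (dU p R c d ⊗ₜ[R] 1 + w ⊗ₜ[R] aX p R) (dV p R c d ⊗ₜ[R] 1 + w ⊗ₜ[R] aY p R)
      (by rw [tmul_one_add_tmul_pow_of_pow_eq_zero hp _ _ Aq.aX_pow, Dt.dU_pow]; rfl)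
      (by rw [tmul_one_add_tmul_pow_of_pow_eq_zero hp _ _ Aq.aY_pow, Dt.dV_pow]; rfl)

theorem rTilde_tmul_one (hp : p.Prime) (w s : Dt p R c d) : rTilde hp w (s ⊗ₜ 1) = s ⊗ₜ 1 :=
  productMap_left_apply _ _ s

theorem rTilde_one_tmul_dU (hp : p.Prime) (w : Dt p R c d) :
    rTilde hp w (1 ⊗ₜ dU p R c d) = dU p R c d ⊗ₜ 1 + w ⊗ₜ aX p R := by
  rw [rTilde, productMap_right_apply, Dt.lift_dU]

theorem rTilde_one_tmul_dV (hp : p.Prime) (w : Dt p R c d) :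
    rTilde hp w (1 ⊗ₜ dV p R c d) = dV p R c d ⊗ₜ 1 + w ⊗ₜ aY p R := by
  rw [rTilde, productMap_right_apply, Dt.lift_dV]

def rTildeInv (hp : p.Prime) (w : (Dt p R c d)ˣ) :
    Dt p R c d ⊗[R] Aq p R →ₐ[R] Dt p R c d ⊗[R] Dt p R c d :=
  productMap includeLeft <|
    Aq.lift ((1 ⊗ₜ[R] dU p R c d - dU p R c d ⊗ₜ[R] 1) * (w.inv ⊗ₜ[R] 1))
      ((1 ⊗ₜ[R] dV p R c d - dV p R c d ⊗ₜ[R] 1) * (w.inv ⊗ₜ[R] 1))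
      (one_tmul_sub_tmul_one_mul_pow_of_pow_eq_algebraMap hp Dt.dU_pow _)
      (one_tmul_sub_tmul_one_mul_pow_of_pow_eq_algebraMap hp Dt.dV_pow _)

theorem rTildeInv_tmul_one (hp : p.Prime) (w : (Dt p R c d)ˣ) (s : Dt p R c d) :
    rTildeInv hp w (s ⊗ₜ 1) = s ⊗ₜ 1 :=
  productMap_left_apply _ _ s

theorem rTildeInv_tmul (hp : p.Prime) (w : (Dt p R c d)ˣ) (s : Dt p R c d) (t : Aq p R) :
    rTildeInv hp w (s ⊗ₜ t) = (s ⊗ₜ 1) * rTildeInv hp w (1 ⊗ₜ t) := by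
  rw [rTildeInv, productMap_apply_tmul, productMap_right_apply, includeLeft_apply]

theorem rTildeInv_one_tmul_aX (hp : p.Prime) (w : (Dt p R c d)ˣ) :
    rTildeInv hp w (1 ⊗ₜ aX p R) = (1 ⊗ₜ dU p R c d - dU p R c d ⊗ₜ 1) * (w.inv ⊗ₜ 1) := by
  rw [rTildeInv, productMap_right_apply, Aq.lift_aX]

theorem rTildeInv_one_tmul_aY (hp : p.Prime) (w : (Dt p R c d)ˣ) :
    rTildeInv hp w (1 ⊗ₜ aY p R) = (1 ⊗ₜ dV p R c d - dV p R c d ⊗ₜ 1) * (w.inv ⊗ₜ 1) := by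
  rw [rTildeInv, productMap_right_apply, Aq.lift_aY]

theorem val_tmul_one_mul_rTildeInv_one_tmul_aX (hp : p.Prime) (w : (Dt p R c d)ˣ) :
    (w.val ⊗ₜ[R] (1 : Dt p R c d)) * rTildeInv hp w (1 ⊗ₜ aX p R) =
      1 ⊗ₜ dU p R c d - dU p R c d ⊗ₜ 1 := by
  rw [rTildeInv_one_tmul_aX]
  exact w.val_tmul_one_mul_mul_inv_tmul_one _

theorem val_tmul_one_mul_rTildeInv_one_tmul_aY (hp : p.Prime) (w : (Dt p R c d)ˣ) :
    (w.val ⊗ₜ[R] (1 : Dt p R c d)) * rTildeInv hp w (1 ⊗ₜ aY p R) =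
      1 ⊗ₜ dV p R c d - dV p R c d ⊗ₜ 1 := by
  rw [rTildeInv_one_tmul_aY]
  exact w.val_tmul_one_mul_mul_inv_tmul_one _

theorem rTildeInv_comp_rTilde (hp : p.Prime) (w : (Dt p R c d)ˣ) :
    (rTildeInv hp w).comp (rTilde hp w) = AlgHom.id R _ := by
  refine Algebra.TensorProduct.ext (Dt.algHom_ext ?_ ?_) (Dt.algHom_ext ?_ ?_)
  all_goals simp only [AlgHom.comp_apply, includeLeft_apply, includeRight_apply, AlgHom.id_apply,
    AlgHom.coe_restrictScalars', rTilde_tmul_one, rTildeInv_tmul_one]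
  · rw [rTilde_one_tmul_dU, map_add, rTildeInv_tmul_one, rTildeInv_tmul,
      val_tmul_one_mul_rTildeInv_one_tmul_aX, add_sub_cancel]
  · rw [rTilde_one_tmul_dV, map_add, rTildeInv_tmul_one, rTildeInv_tmul,
      val_tmul_one_mul_rTildeInv_one_tmul_aY, add_sub_cancel]

theorem rTilde_comp_rTildeInv (hp : p.Prime) (w : (Dt p R c d)ˣ) :
    (rTilde hp w).comp (rTildeInv hp w) = AlgHom.id R _ := by
  refine Algebra.TensorProduct.ext (Dt.algHom_ext ?_ ?_) (Aq.algHom_ext ?_ ?_)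
  all_goals simp only [AlgHom.comp_apply, includeLeft_apply, includeRight_apply, AlgHom.id_apply,
    AlgHom.coe_restrictScalars', rTilde_tmul_one, rTildeInv_tmul_one]
  · rw [rTildeInv_one_tmul_aX, map_mul, map_sub, rTilde_one_tmul_dU, rTilde_tmul_one,
      rTilde_tmul_one, add_sub_cancel_left, w.val_tmul_mul_inv_tmul_one]
  · rw [rTildeInv_one_tmul_aY, map_mul, map_sub, rTilde_one_tmul_dV, rTilde_tmul_one,
      rTilde_tmul_one, add_sub_cancel_left, w.val_tmul_mul_inv_tmul_one]

end

/-- with `a^p + λ^p c` invertible, the algebra homomorphism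
`r̃ : D̃ ⊗ D̃ → D̃ ⊗ A` determined by `U⊗1 ↦ U⊗1`, `V⊗1 ↦ V⊗1`,
`1⊗U ↦ U⊗1 + (a+λU)⊗X`, `1⊗V ↦ V⊗1 + (a+λU)⊗Y` is well defined and bijective,
with inverse sending `1⊗X ↦ (1⊗U − U⊗1)·((a+λU)⁻¹⊗1)`,
`1⊗Y ↦ (1⊗V − V⊗1)·((a+λU)⁻¹⊗1)`. -/
theorem stmt13 (p : ℕ) (hp : p.Prime) (R : Type*) [CommRing R] [CharP R p]
    (lam a c d : R) (hu : IsUnit (a ^ p + lam ^ p * c)) :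
    ∃ (rt : Dt p R c d ⊗[R] Dt p R c d →ₐ[R] Dt p R c d ⊗[R] Aq p R)
      (rt' : Dt p R c d ⊗[R] Aq p R →ₐ[R] Dt p R c d ⊗[R] Dt p R c d),
      rt (dU p R c d ⊗ₜ 1) = dU p R c d ⊗ₜ 1 ∧
      rt (dV p R c d ⊗ₜ 1) = dV p R c d ⊗ₜ 1 ∧
      rt (1 ⊗ₜ dU p R c d) = dU p R c d ⊗ₜ 1 +
        (algebraMap R (Dt p R c d) a +
          algebraMap R (Dt p R c d) lam * dU p R c d) ⊗ₜ aX p R ∧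
      rt (1 ⊗ₜ dV p R c d) = dV p R c d ⊗ₜ 1 +
        (algebraMap R (Dt p R c d) a +
          algebraMap R (Dt p R c d) lam * dU p R c d) ⊗ₜ aY p R ∧
      Function.Bijective rt ∧
      rt' (dU p R c d ⊗ₜ 1) = dU p R c d ⊗ₜ 1 ∧
      rt' (dV p R c d ⊗ₜ 1) = dV p R c d ⊗ₜ 1 ∧
      ((algebraMap R (Dt p R c d) a +
            algebraMap R (Dt p R c d) lam * dU p R c d) ⊗ₜ[R] (1 : Dt p R c d)) *
          rt' (1 ⊗ₜ aX p R)
        = 1 ⊗ₜ dU p R c d - dU p R c d ⊗ₜ 1 ∧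
      ((algebraMap R (Dt p R c d) a +
            algebraMap R (Dt p R c d) lam * dU p R c d) ⊗ₜ[R] (1 : Dt p R c d)) *
          rt' (1 ⊗ₜ aY p R)
        = 1 ⊗ₜ dV p R c d - dV p R c d ⊗ₜ 1 ∧
      rt'.comp rt = AlgHom.id R _ ∧ rt.comp rt' = AlgHom.id R _ := by
  obtain ⟨w, hw⟩ := isUnit_algebraMap_add_algebraMap_mul hp Dt.dU_pow hu
  rw [← hw]
  refine ⟨rTilde hp w, rTildeInv hp w, rTilde_tmul_one hp _ _, rTilde_tmul_one hp _ _,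
    rTilde_one_tmul_dU hp _, rTilde_one_tmul_dV hp _, ?_, rTildeInv_tmul_one hp _ _,
    rTildeInv_tmul_one hp _ _, val_tmul_one_mul_rTildeInv_one_tmul_aX hp w,
    val_tmul_one_mul_rTildeInv_one_tmul_aY hp w, rTildeInv_comp_rTilde hp w,
    rTilde_comp_rTildeInv hp w⟩
  exact (AlgEquiv.ofAlgHom _ _ (rTilde_comp_rTildeInv hp w) (rTildeInv_comp_rTilde hp w)).bijective
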